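/- Let σ : ℝ → ℝ be differentiable with σ'(ℝ) ⊆ [α, 1], 0 < α ≤ 1, A ∈ ℝ^{d×d}, b ∈ ℝ^d, and let φ be the time-1 flow map of u' = σ(Au + b). Define δ⋆ = max over diagonal D with D_ii ∈ [α,1] of μ₂(DA), where μ₂ is the logarithmic 2-norm. Then φ is Lipschitz with constant at most e^{δ⋆}: ‖φ(x) − φ(y)‖₂ ≤ e^{δ⋆}·‖x − y‖₂ for all x, y ∈ ℝ^d. -/

import Mathlib

/-!
By the mean value theorem, `σ(Ax + b) - σ(Ay + b) = D A (x - y)` for a diagonal `D` with entries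
in `[α, 1]`, so `⟪x - y, σ(Ax + b) - σ(Ay + b)⟫ ≤ μ₂(DA) ‖x - y‖² ≤ δ⋆ ‖x - y‖²`. Hence the squared
distance `E` of two trajectories satisfies `E' ≤ 2 δ⋆ E`, and Grönwall's inequality gives
`E(1) ≤ e^{2δ⋆} E(0)`.
-/

open Matrix

noncomputable def norm2 {n : ℕ} (v : Fin n → ℝ) : ℝ := Real.sqrt (∑ i, v i ^ 2)

def inner2 {n : ℕ} (u v : Fin n → ℝ) : ℝ := ∑ i, u i * v i

noncomputable def specNorm {m n : ℕ} (A : Matrix (Fin m) (Fin n) ℝ) : ℝ :=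
  ‖LinearMap.toContinuousLinearMap (Matrix.toEuclideanLin A)‖

theorem symPart_isHermitian {n : ℕ} (A : Matrix (Fin n) (Fin n) ℝ) :
    (((1:ℝ)/2) • (A + Aᵀ)).IsHermitian := by
  unfold Matrix.IsHermitian
  ext i j
  simp [Matrix.conjTranspose_apply, Matrix.transpose_apply]
  ring

/-- The logarithmic 2-norm: largest eigenvalue of the symmetric part (A + Aᵀ)/2. -/
noncomputable def mu2 {n : ℕ} (A : Matrix (Fin n) (Fin n) ℝ) : ℝ :=
  ⨆ i, (symPart_isHermitian A).eigenvalues i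

/-- The singular values of A: square roots of the eigenvalues of AᵀA. -/
noncomputable def singVals {m n : ℕ} (A : Matrix (Fin m) (Fin n) ℝ) : Fin n → ℝ :=
  fun i => Real.sqrt ((show (Aᵀ * A).IsHermitian by simpa using Matrix.isHermitian_conjTranspose_mul_self A).eigenvalues i)

open Set Real Filter Topology

open scoped MatrixOrder in
theorem Matrix.IsHermitian.dotProduct_mulVec_le_iSup_eigenvalues {n : Type*} [Fintype n]
    [DecidableEq n] {S : Matrix n n ℝ} (hS : S.IsHermitian) (v : n → ℝ) :
    v ⬝ᵥ (S *ᵥ v) ≤ (⨆ i, hS.eigenvalues i) * (v ⬝ᵥ v) := by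
  have hle : S ≤ algebraMap ℝ _ (⨆ i, hS.eigenvalues i) := by
    refine le_algebraMap_of_spectrum_le fun x hx => ?_
    rw [hS.spectrum_real_eq_range_eigenvalues] at hx
    obtain ⟨i, rfl⟩ := hx
    exact le_ciSup (finite_range _).bddAbove i
  simpa only [star_trivial, Algebra.algebraMap_eq_smul_one, sub_mulVec, smul_mulVec, one_mulVec,
    dotProduct_sub, dotProduct_smul, smul_eq_mul, sub_nonneg] using
    (Matrix.le_iff.mp hle).dotProduct_mulVec_nonneg v

theorem dotProduct_mulVec_symPart {n : Type*} [Fintype n] (M : Matrix n n ℝ) (v : n → ℝ) :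
    v ⬝ᵥ ((((1:ℝ)/2) • (M + Mᵀ)) *ᵥ v) = v ⬝ᵥ (M *ᵥ v) := by
  have htr : v ⬝ᵥ (Mᵀ *ᵥ v) = v ⬝ᵥ (M *ᵥ v) := by
    rw [mulVec_transpose, dotProduct_comm, dotProduct_mulVec]
  rw [smul_mulVec, add_mulVec, dotProduct_smul, dotProduct_add, htr, smul_eq_mul]
  ring

theorem dotProduct_mulVec_le_mu2 {n : ℕ} (M : Matrix (Fin n) (Fin n) ℝ) (v : Fin n → ℝ) :
    v ⬝ᵥ (M *ᵥ v) ≤ mu2 M * (v ⬝ᵥ v) := by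
  rw [← dotProduct_mulVec_symPart]
  exact (symPart_isHermitian M).dotProduct_mulVec_le_iSup_eigenvalues v

theorem exists_mem_sub_eq_mul_sub_of_deriv_mem {f : ℝ → ℝ} {S : Set ℝ} (hf : Differentiable ℝ f)
    (hS : ∀ t, deriv f t ∈ S) (x y : ℝ) : ∃ k ∈ S, f y - f x = k * (y - x) := by
  rcases eq_or_ne x y with rfl | hxy
  · exact ⟨_, hS x, by ring⟩
  refine ⟨slope f x y, ?_, by rw [slope_def_field, div_mul_cancel₀ _ (sub_ne_zero.2 hxy.symm)]⟩
  wlog hlt : x < y generalizing x y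
  · rw [slope_comm]
    exact this y x hxy.symm (lt_of_le_of_ne (not_lt.1 hlt) hxy.symm)
  obtain ⟨c, -, hc⟩ := exists_deriv_eq_slope' f hlt hf.continuous.continuousOn hf.differentiableOn
  exact hc ▸ hS c

theorem exists_diagonal_mulVec_eq_sub {n : Type*} [Fintype n] [DecidableEq n] {f : ℝ → ℝ}
    {S : Set ℝ} (hf : Differentiable ℝ f) (hS : ∀ t, deriv f t ∈ S) (u w : n → ℝ) :
    ∃ k : n → ℝ, (∀ i, k i ∈ S) ∧ (fun i => f (u i) - f (w i)) = diagonal k *ᵥ (u - w) := by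
  choose k hkS hk using fun i => exists_mem_sub_eq_mul_sub_of_deriv_mem hf hS (w i) (u i)
  refine ⟨k, hkS, funext fun i => ?_⟩
  rw [mulVec_diagonal, hk, Pi.sub_apply]

theorem dotProduct_activation_sub_le {d : ℕ} {σ : ℝ → ℝ} {α : ℝ}
    (hdiff : Differentiable ℝ σ) (hσ' : ∀ t : ℝ, deriv σ t ∈ Set.Icc α 1)
    {A : Matrix (Fin d) (Fin d) ℝ} (b : Fin d → ℝ) {δs : ℝ}
    (hδs : δs ∈ upperBounds {c | ∃ D : Matrix (Fin d) (Fin d) ℝ,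
      (∀ i, D i i ∈ Set.Icc α 1) ∧ (∀ i j, i ≠ j → D i j = 0) ∧ c = mu2 (D * A)})
    (x y : Fin d → ℝ) :
    (x - y) ⬝ᵥ (fun i => σ ((A *ᵥ x) i + b i) - σ ((A *ᵥ y) i + b i)) ≤ δs * ((x - y) ⬝ᵥ (x - y)) := by
  obtain ⟨k, hkS, hk⟩ := exists_diagonal_mulVec_eq_sub hdiff hσ' (A *ᵥ x + b) (A *ᵥ y + b)
  have hD : mu2 (diagonal k * A) ≤ δs :=
    hδs ⟨diagonal k, fun i => by simpa using hkS i, fun i j hij => diagonal_apply_ne _ hij, rfl⟩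
  have hsub : A *ᵥ x + b - (A *ᵥ y + b) = A *ᵥ (x - y) := by rw [mulVec_sub]; abel
  calc (x - y) ⬝ᵥ (fun i => σ ((A *ᵥ x) i + b i) - σ ((A *ᵥ y) i + b i))
      = (x - y) ⬝ᵥ ((diagonal k * A) *ᵥ (x - y)) := by
        rw [← mulVec_mulVec, ← hsub, ← hk]; rfl
    _ ≤ mu2 (diagonal k * A) * ((x - y) ⬝ᵥ (x - y)) := dotProduct_mulVec_le_mu2 _ _
    _ ≤ δs * ((x - y) ⬝ᵥ (x - y)) := mul_le_mul_of_nonneg_right hD (dotProduct_self_star_nonneg _)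

theorem hasDerivWithinAt_dotProduct_self {ι : Type*} [Fintype ι] {e : ℝ → ι → ℝ} {e' : ι → ℝ}
    {s : Set ℝ} {t : ℝ} (he : ∀ i, HasDerivWithinAt (fun τ => e τ i) (e' i) s t) :
    HasDerivWithinAt (fun τ => e τ ⬝ᵥ e τ) (2 * (e t ⬝ᵥ e')) s t := by
  have h := HasDerivWithinAt.fun_sum (u := Finset.univ) (A := fun i τ => e τ i * e τ i)
    fun i _ => (he i).mul (he i)
  refine h.congr_deriv ?_
  simp only [dotProduct, Finset.mul_sum]
  exact Finset.sum_congr rfl fun i _ => by ring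

theorem le_exp_mul_of_hasDerivWithinAt_le {f f' : ℝ → ℝ} {K a b : ℝ} (hab : a ≤ b)
    (hf : ∀ t ∈ Icc a b, HasDerivWithinAt f (f' t) (Icc a b) t)
    (bound : ∀ t ∈ Icc a b, f' t ≤ K * f t) :
    f b ≤ exp (K * (b - a)) * f a := by
  have hcont : ContinuousOn f (Icc a b) := fun t ht => (hf t ht).continuousWithinAt
  have hslope : ∀ x ∈ Ico a b, ∀ r, f' x < r → ∃ᶠ z in 𝓝[>] x, (z - x)⁻¹ * (f z - f x) < r :=
    fun x hx r hr => ((hf x (Ico_subset_Icc_self hx)).mono_of_mem_nhdsWithin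
      (Icc_mem_nhdsGE_of_mem hx)).liminf_right_slope_le hr
  have := le_gronwallBound_of_liminf_deriv_right_le (K := K) (ε := 0) hcont hslope le_rfl
    (fun x hx => (add_zero (K * f x)).symm ▸ bound x (Ico_subset_Icc_self hx)) b (right_mem_Icc.2 hab)
  rwa [gronwallBound_ε0, mul_comm] at this

theorem norm2_eq_sqrt_dotProduct {n : ℕ} (v : Fin n → ℝ) : norm2 v = √(v ⬝ᵥ v) := by
  simp only [norm2, dotProduct, sq]

theorem flow_lipschitz_log_norm_bound_general {d : ℕ} (σ : ℝ → ℝ) (α : ℝ)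
    (hdiff : Differentiable ℝ σ) (hσ' : ∀ t : ℝ, deriv σ t ∈ Set.Icc α 1)
    (A : Matrix (Fin d) (Fin d) ℝ) (b : Fin d → ℝ) (δs : ℝ)
    (hδs : IsGreatest {c | ∃ D : Matrix (Fin d) (Fin d) ℝ,
      (∀ i, D i i ∈ Set.Icc α 1) ∧ (∀ i j, i ≠ j → D i j = 0) ∧ c = mu2 (D * A)} δs)
    (z zb : ℝ → Fin d → ℝ)
    (hz : ∀ t ∈ Set.Icc (0:ℝ) 1, ∀ i : Fin d,
      HasDerivWithinAt (fun s => z s i) (σ (A.mulVec (z t) i + b i)) (Set.Icc 0 1) t)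
    (hzb : ∀ t ∈ Set.Icc (0:ℝ) 1, ∀ i : Fin d,
      HasDerivWithinAt (fun s => zb s i) (σ (A.mulVec (zb t) i + b i)) (Set.Icc 0 1) t) :
    norm2 (z 1 - zb 1) ≤ Real.exp δs * norm2 (z 0 - zb 0) := by
  set E : ℝ → ℝ := fun t => (z t - zb t) ⬝ᵥ (z t - zb t)
  have hE1 : E 1 ≤ exp (2 * δs * (1 - 0)) * E 0 := by
    refine le_exp_mul_of_hasDerivWithinAt_le zero_le_one
      (fun t ht => hasDerivWithinAt_dotProduct_self fun i => (hz t ht i).sub (hzb t ht i))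
      fun t _ => ?_
    have := dotProduct_activation_sub_le hdiff hσ' b hδs.2 (z t) (zb t)
    linarith
  calc norm2 (z 1 - zb 1) = √(E 1) := norm2_eq_sqrt_dotProduct _
    _ ≤ √(exp (2 * δs * (1 - 0)) * E 0) := Real.sqrt_le_sqrt hE1
    _ = exp δs * norm2 (z 0 - zb 0) := by
      rw [norm2_eq_sqrt_dotProduct, Real.sqrt_mul (exp_nonneg _), ← exp_half]
      congr 2
      ring

theorem flow_lipschitz_log_norm_bound {d : ℕ} (σ : ℝ → ℝ) (α : ℝ) (hα : 0 < α) (hα1 : α ≤ 1)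
    (hdiff : Differentiable ℝ σ) (hσ' : ∀ t : ℝ, deriv σ t ∈ Set.Icc α 1)
    (A : Matrix (Fin d) (Fin d) ℝ) (b : Fin d → ℝ) (δs : ℝ)
    (hδs : IsGreatest {c | ∃ D : Matrix (Fin d) (Fin d) ℝ,
      (∀ i, D i i ∈ Set.Icc α 1) ∧ (∀ i j, i ≠ j → D i j = 0) ∧ c = mu2 (D * A)} δs)
    (z zb : ℝ → Fin d → ℝ)
    (hz : ∀ t ∈ Set.Icc (0:ℝ) 1, ∀ i : Fin d,
      HasDerivWithinAt (fun s => z s i) (σ (A.mulVec (z t) i + b i)) (Set.Icc 0 1) t)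
    (hzb : ∀ t ∈ Set.Icc (0:ℝ) 1, ∀ i : Fin d,
      HasDerivWithinAt (fun s => zb s i) (σ (A.mulVec (zb t) i + b i)) (Set.Icc 0 1) t) :
    norm2 (z 1 - zb 1) ≤ Real.exp δs * norm2 (z 0 - zb 0) :=
  flow_lipschitz_log_norm_bound_general σ α hdiff hσ' A b δs hδs z zb hz hzb
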